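/- Let Γ be a rooted digraph satisfying P0, P1, P2, P3 with out-valency m = p·q a product of primes p < q, suppose Γ is not a tree and δ_{N−1} is trivial. Then there is a system {ω_1, …, ω_p} of blocks for Aut(Γ) in Γ^1(α) with exactly p blocks, each of size q, and with pairwise disjoint descendant sets; moreover r_i = 1 for i ≤ N−1 and r_i = p for i ≥ N. -/

import Mathlib

variable {V : Type*}

/-- Directed walks of length `n` (`n`-arcs). -/
def arcOf (E : V → V → Prop) : ℕ → V → V → Prop
  | 0 => fun x y => x = y
  | n + 1 => fun x y => ∃ z, E x z ∧ arcOf E n z y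

/-- Vertices reachable from `x` by a directed path of length exactly `n`. -/
def descN (E : V → V → Prop) (n : ℕ) (x : V) : Set V := {y | arcOf E n x y}

/-- The descendant set of `x` (including `x` itself). -/
def desc (E : V → V → Prop) (x : V) : Set V := {y | ∃ n, arcOf E n x y}

theorem self_mem_desc (E : V → V → Prop) (x : V) : x ∈ desc E x := ⟨0, by simp [arcOf]⟩

def descSet (E : V → V → Prop) (S : Set V) : Set V := ⋃ x ∈ S, desc E x

theorem self_mem_descSet (E : V → V → Prop) {S : Set V} {x : V} (hx : x ∈ S) :
    x ∈ descSet E S := Set.mem_biUnion hx (self_mem_desc E x)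

def outSet (E : V → V → Prop) (x : V) : Set V := {y | E x y}

def inSet (E : V → V → Prop) (x : V) : Set V := {y | E y x}

def IsAut (E : V → V → Prop) (g : Equiv.Perm V) : Prop := ∀ x y, E x y ↔ E (g x) (g y)

def Rooted (E : V → V → Prop) (α : V) : Prop := ∀ y, y ∈ desc E α

def P0 (E : V → V → Prop) (α : V) (m : ℕ) : Prop :=
  0 < m ∧ (∀ x, (outSet E x).Finite ∧ (outSet E x).ncard = m) ∧
    ∀ s t : ℕ, s ≠ t → Disjoint (descN E s α) (descN E t α)

def P1 (E : V → V → Prop) : Prop :=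
  ∀ u : V, ∃ f : desc E u ≃ V, ∀ x y : desc E u, (E x.1 y.1 ↔ E (f x) (f y))

def P2 (E : V → V → Prop) (α : V) : Prop :=
  ∀ i : ℕ, ∀ x ∈ descN E i α, ∀ y ∈ descN E i α,
    ∃ g : Equiv.Perm V, IsAut E g ∧ g α = α ∧ g x = y

def P3 (E : V → V → Prop) (α : V) : Prop :=
  ∀ i : ℕ, (descN E i α).ncard < (descN E (i + 1) α).ncard

def EdgeTrans (E : V → V → Prop) : Prop :=
  ∀ a b c d : V, E a b → E c d → ∃ g : Equiv.Perm V, IsAut E g ∧ g a = c ∧ g b = d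

def VertexTrans (E : V → V → Prop) : Prop :=
  ∀ u v : V, ∃ g : Equiv.Perm V, IsAut E g ∧ g u = v

def NoDirectedCycles (E : V → V → Prop) : Prop :=
  ∀ s : ℕ, 1 ≤ s → ∀ x : V, ¬ arcOf E s x x

def HasPropZ {W : Type*} (E : W → W → Prop) : Prop :=
  ∃ f : W → ℤ, Function.Surjective f ∧ ∀ x y : W, E x y → f y = f x + 1

def deltaSetoid (E : V → V → Prop) (n : ℕ) : Setoid V :=
  ⟨fun u v => descN E n u = descN E n v, ⟨fun _ => rfl, Eq.symm, Eq.trans⟩⟩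

def QEdge (E : V → V → Prop) (n : ℕ)
    (A B : Quotient (deltaSetoid E n)) : Prop :=
  ∃ a b : V, Quotient.mk (deltaSetoid E n) a = A ∧ Quotient.mk (deltaSetoid E n) b = B ∧ E a b

def cls (E : V → V → Prop) (n : ℕ) (v : V) : Set V := {u | descN E n u = descN E n v}

def QEdgeSet (E : V → V → Prop) (A B : Set V) : Prop := ∃ a ∈ A, ∃ b ∈ B, E a b

def WDH (E : V → V → Prop) : Prop :=
  VertexTrans E ∧
  ∀ (X Y : Finset V) (f : descSet E (↑X : Set V) ≃ descSet E (↑Y : Set V)),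
    (∀ a b : descSet E (↑X : Set V), (E a.1 b.1 ↔ E (f a).1 (f b).1)) →
    ∃ g : Equiv.Perm V, IsAut E g ∧
      ∀ (x : V) (hx : x ∈ X), g x = (f ⟨x, self_mem_descSet E (by exact_mod_cast hx)⟩).1

def EdgeT (E : V → V → Prop) := {p : V × V // E p.1 p.2}

def reachSetoid (E : V → V → Prop) : Setoid (EdgeT E) :=
  ⟨Relation.EqvGen (fun a b => a.1.1 = b.1.1 ∨ a.1.2 = b.1.2),
    Relation.EqvGen.is_equivalence _⟩

def AlSources (E : V → V → Prop) (A : Quotient (reachSetoid E)) : Set V :=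
  {v | ∃ e : EdgeT E, Quotient.mk (reachSetoid E) e = A ∧ v = e.1.1}

def AlSinks (E : V → V → Prop) (A : Quotient (reachSetoid E)) : Set V :=
  {v | ∃ e : EdgeT E, Quotient.mk (reachSetoid E) e = A ∧ v = e.1.2}

def AlEdge (E : V → V → Prop) (A B : Quotient (reachSetoid E)) : Prop :=
  ∃ v, v ∈ AlSinks E A ∧ v ∈ AlSources E B

/-!
Counting arcs between consecutive levels gives `|Γ^{n+1}(α)| r_{n+1} = |Γ^n(α)| m`, so every
`r_i` divides a power of `m`, and `r_N ∣ m` because `r_N ^ k ∣ m ^ (N + k)` for all `k`.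
Call two vertices of level `1` linked if a chain of vertices of level `1`, consecutive ones
having a common descendant, joins them. The classes form an `Aut(Γ)_α`-invariant partition of
`Γ^1(α)` with pairwise disjoint descendant sets, into `s` blocks of a common size `c`, so `m = s c`.
By `P1`, `P2` and double counting, a vertex of level `N` has exactly `r_N` ancestors on level `1`,
and beyond level `N` these ancestor sets do not change along arcs. Since `δ_{N-1}` is trivial they
cannot partition level `1`; as each lies inside a block, `r_N < c`, and as `P1` propagates the
linkage of level `1` to all levels, `s ≥ 2`. Hence `2 ≤ r_N < c < p q` with `r_N, c ∣ p q`, which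
forces `r_N = p`, `c = q`, `s = p`. Finally `r_i < p` for `i < N`, and a prime factor of `r_i`
would divide `p q`, so `r_i = 1`.
-/

open Set

section Arcs

variable {E : V → V → Prop} {x y z : V} {n : ℕ}

theorem arcOf_one : arcOf E 1 x y ↔ E x y :=
  ⟨fun ⟨_, h, (rfl : _ = y)⟩ => h, fun h => ⟨y, h, rfl⟩⟩

theorem arcOf_add {a b : ℕ} : arcOf E (a + b) x z ↔ ∃ y, arcOf E a x y ∧ arcOf E b y z := by
  induction a generalizing x with
  | zero => exact ⟨fun h => ⟨x, rfl, by simpa using h⟩, fun ⟨_, (hx : x = _), h⟩ => by simpa [hx]⟩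
  | succ a ih =>
    rw [Nat.succ_add]
    constructor
    · rintro ⟨w, hxw, hw⟩
      obtain ⟨y, hwy, hy⟩ := ih.1 hw
      exact ⟨y, ⟨w, hxw, hwy⟩, hy⟩
    · rintro ⟨y, ⟨w, hxw, hwy⟩, hy⟩
      exact ⟨w, hxw, ih.2 ⟨y, hwy, hy⟩⟩

theorem arcOf_succ' : arcOf E (n + 1) x z ↔ ∃ y, arcOf E n x y ∧ E y z := by
  simp only [arcOf_add, arcOf_one]

theorem mem_desc_of_adj (hx : x ∈ desc E z) (h : E x y) : y ∈ desc E z :=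
  let ⟨k, hk⟩ := hx; ⟨k + 1, arcOf_succ'.2 ⟨x, hk, h⟩⟩

theorem descN_zero : descN E 0 x = {x} := by
  ext y; exact eq_comm

theorem descN_succ : descN E (n + 1) x = ⋃ y ∈ descN E n x, outSet E y := by
  ext z; simp only [mem_iUnion, exists_prop]; exact arcOf_succ'

theorem mem_descN_add (hy : y ∈ descN E n x) {k : ℕ} (h : arcOf E k y z) :
    z ∈ descN E (n + k) x :=
  arcOf_add.2 ⟨y, hy, h⟩

theorem mem_descN_one_add (hy : y ∈ descN E 1 x) {k : ℕ} (h : arcOf E k y z) :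
    z ∈ descN E (k + 1) x := by
  rw [Nat.add_comm]; exact mem_descN_add hy h

end Arcs

section Levels

variable {E : V → V → Prop} {α x y : V} {m : ℕ}

namespace P0

theorem eq_of_mem_descN (h0 : P0 E α m) {s t : ℕ} (hs : x ∈ descN E s α)
    (ht : x ∈ descN E t α) : s = t :=
  by_contra fun hst => (h0.2.2 s t hst).ne_of_mem hs ht rfl

theorem mem_descN_of_arcOf (h0 : P0 E α m) (hroot : Rooted E α) {s k : ℕ}
    (hy : y ∈ descN E (s + k) α) (h : arcOf E k x y) : x ∈ descN E s α := by
  obtain ⟨j, hj⟩ := hroot x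
  obtain rfl : j = s := by have := h0.eq_of_mem_descN (mem_descN_add hj h) hy; omega
  exact hj

theorem inSet_subset (h0 : P0 E α m) (hroot : Rooted E α) {n : ℕ}
    (hy : y ∈ descN E (n + 1) α) : inSet E y ⊆ descN E n α :=
  fun _ hx => h0.mem_descN_of_arcOf hroot hy (arcOf_one.2 hx)

theorem finite_descN (h0 : P0 E α m) (x : V) (n : ℕ) : (descN E n x).Finite := by
  induction n with
  | zero => simp [descN_zero]
  | succ n ih => rw [descN_succ]; exact ih.biUnion fun y _ => (h0.2.1 y).1

theorem finite_inSet (h0 : P0 E α m) (hroot : Rooted E α) {n : ℕ}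
    (hy : y ∈ descN E (n + 1) α) : (inSet E y).Finite :=
  (h0.finite_descN α n).subset (h0.inSet_subset hroot hy)

theorem nonempty_outSet (h0 : P0 E α m) (x : V) : (outSet E x).Nonempty :=
  nonempty_of_ncard_ne_zero (by rw [(h0.2.1 x).2]; exact h0.1.ne')

theorem nonempty_descN (h0 : P0 E α m) (x : V) (n : ℕ) : (descN E n x).Nonempty := by
  induction n with
  | zero => simp [descN_zero]
  | succ n ih =>
    obtain ⟨y, hy⟩ := ih
    obtain ⟨z, hz⟩ := h0.nonempty_outSet y
    exact ⟨z, arcOf_succ'.2 ⟨y, hy, hz⟩⟩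

theorem ncard_descN_pos (h0 : P0 E α m) (x : V) (n : ℕ) : 0 < (descN E n x).ncard :=
  (ncard_pos (h0.finite_descN x n)).2 (h0.nonempty_descN x n)

end P0

end Levels

theorem ncard_mul_eq_ncard_mul_of_biregular {β γ : Type*} {s : Set β} {t : Set γ}
    (hs : s.Finite) (ht : t.Finite) (R : β → γ → Prop) {a b : ℕ}
    (hst : ∀ x ∈ s, {y ∈ t | R x y}.ncard = a) (hts : ∀ y ∈ t, {x ∈ s | R x y}.ncard = b) :
    s.ncard * a = t.ncard * b := by
  classical
  rw [ncard_eq_toFinset_card s hs, ncard_eq_toFinset_card t ht]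
  refine Finset.card_mul_eq_card_mul R (fun x hx => ?_) (fun y hy => ?_)
  · rw [← ncard_coe_finset, Finset.coe_bipartiteAbove]
    simpa only [Finite.mem_toFinset] using hst x (hs.mem_toFinset.1 hx)
  · rw [← ncard_coe_finset, Finset.coe_bipartiteBelow]
    simpa only [Finite.mem_toFinset] using hts y (ht.mem_toFinset.1 hy)

def IsInValency (E : V → V → Prop) (α : V) (r : ℕ → ℕ) : Prop :=
  ∀ i : ℕ, 1 ≤ i → ∀ x ∈ descN E i α, (inSet E x).ncard = r i

section Counting

variable {E : V → V → Prop} {α : V} {m : ℕ} {r : ℕ → ℕ}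

namespace P0

theorem ncard_descN_succ_mul (h0 : P0 E α m) (hroot : Rooted E α) (hr : IsInValency E α r)
    (n : ℕ) : (descN E (n + 1) α).ncard * r (n + 1) = (descN E n α).ncard * m := by
  refine (ncard_mul_eq_ncard_mul_of_biregular (h0.finite_descN α n) (h0.finite_descN α (n + 1)) E
    (fun x hx => ?_) (fun y hy => ?_)).symm
  · rw [← (h0.2.1 x).2]
    congr 1
    ext y
    exact ⟨fun h => h.2, fun h => ⟨arcOf_succ'.2 ⟨x, hx, h⟩, h⟩⟩
  · rw [← hr (n + 1) n.succ_pos y hy]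
    congr 1
    ext x
    exact ⟨fun h => h.2, fun h => ⟨h0.inSet_subset hroot hy h, h⟩⟩

theorem ncard_descN_dvd (h0 : P0 E α m) (hroot : Rooted E α) (hr : IsInValency E α r)
    (n : ℕ) : (descN E n α).ncard ∣ m ^ n := by
  induction n with
  | zero => simp [descN_zero]
  | succ n ih =>
    rw [pow_succ]
    exact (Dvd.intro _ (h0.ncard_descN_succ_mul hroot hr n)).trans (mul_dvd_mul_right ih m)

theorem inValency_dvd_pow (h0 : P0 E α m) (hroot : Rooted E α) (hr : IsInValency E α r)
    (n : ℕ) : r (n + 1) ∣ m ^ (n + 1) := by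
  rw [pow_succ]
  exact (Dvd.intro_left _ (h0.ncard_descN_succ_mul hroot hr n)).trans
    (mul_dvd_mul_right (h0.ncard_descN_dvd hroot hr n) m)

theorem inValency_pow_dvd (h0 : P0 E α m) (hroot : Rooted E α) (hr : IsInValency E α r)
    {N : ℕ} (hNconst : ∀ j, N ≤ j → r j = r N) (k : ℕ) : r N ^ k ∣ m ^ (N + k) := by
  have key : (descN E (N + k) α).ncard * r N ^ k = (descN E N α).ncard * m ^ k := by
    induction k with
    | zero => simp
    | succ k ih =>
      calc (descN E (N + (k + 1)) α).ncard * r N ^ (k + 1)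
          = (descN E (N + k + 1) α).ncard * r (N + k + 1) * r N ^ k := by
            rw [hNconst (N + k + 1) (by omega), ← Nat.add_assoc, pow_succ]; ring
        _ = (descN E N α).ncard * m ^ (k + 1) := by
            rw [h0.ncard_descN_succ_mul hroot hr, mul_right_comm, ih]; ring
  rw [pow_add]
  exact (Dvd.intro_left _ key).trans (mul_dvd_mul_right (h0.ncard_descN_dvd hroot hr N) _)

theorem inValency_one (h0 : P0 E α m) (hroot : Rooted E α) (hr : IsInValency E α r) :
    r 1 = 1 := by
  obtain ⟨y, hy⟩ := h0.nonempty_descN α 1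
  rw [← hr 1 le_rfl y hy, ncard_eq_one]
  refine ⟨α, subset_antisymm ?_ (singleton_subset_iff.2 (arcOf_one.1 hy))⟩
  simpa [descN_zero] using h0.inSet_subset hroot (n := 0) hy

theorem ncard_descN_one (h0 : P0 E α m) (hroot : Rooted E α) (hr : IsInValency E α r) :
    (descN E 1 α).ncard = m := by
  simpa [h0.inValency_one hroot hr, descN_zero] using h0.ncard_descN_succ_mul hroot hr 0

end P0

end Counting

structure IsOutClosedEmbedding (E : V → V → Prop) (g : V → V) : Prop where
  injective : Function.Injective g
  adj_iff : ∀ a b, E (g a) (g b) ↔ E a b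
  out_closed : ∀ a z, E (g a) z → z ∈ range g

namespace IsOutClosedEmbedding

variable {E : V → V → Prop} {g : V → V} {n : ℕ} {a b z : V}

theorem arcOf_iff_exists (hg : IsOutClosedEmbedding E g) :
    arcOf E n (g a) z ↔ ∃ b, arcOf E n a b ∧ g b = z := by
  induction n generalizing a with
  | zero => exact ⟨fun h => ⟨a, rfl, h⟩, fun ⟨_, (hab : a = _), h⟩ => hab ▸ h⟩
  | succ n ih =>
    constructor
    · rintro ⟨w, haw, hw⟩
      obtain ⟨c, rfl⟩ := hg.out_closed a w haw
      obtain ⟨b, hcb, rfl⟩ := ih.1 hw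
      exact ⟨b, ⟨c, (hg.adj_iff a c).1 haw, hcb⟩, rfl⟩
    · rintro ⟨b, ⟨c, hac, hcb⟩, rfl⟩
      exact ⟨g c, (hg.adj_iff a c).2 hac, ih.2 ⟨b, hcb, rfl⟩⟩

theorem arcOf_iff (hg : IsOutClosedEmbedding E g) : arcOf E n (g a) (g b) ↔ arcOf E n a b := by
  simp only [hg.arcOf_iff_exists, hg.injective.eq_iff, exists_eq_right]

theorem descN_eq_image (hg : IsOutClosedEmbedding E g) (n : ℕ) (a : V) :
    descN E n (g a) = g '' descN E n a := by
  ext z; exact hg.arcOf_iff_exists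

theorem desc_eq_image (hg : IsOutClosedEmbedding E g) (a : V) : desc E (g a) = g '' desc E a := by
  ext z
  simp only [desc, mem_image, hg.arcOf_iff_exists]
  exact ⟨fun ⟨n, b, h, hb⟩ => ⟨b, ⟨n, h⟩, hb⟩, fun ⟨b, ⟨n, h⟩, hb⟩ => ⟨n, b, h, hb⟩⟩

theorem image_inSet (hg : IsOutClosedEmbedding E g) (b : V) :
    g '' inSet E b = range g ∩ inSet E (g b) := by
  ext z
  constructor
  · rintro ⟨a, hab, rfl⟩
    exact ⟨mem_range_self a, (hg.adj_iff a b).2 hab⟩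
  · rintro ⟨⟨a, rfl⟩, hab⟩
    exact ⟨a, (hg.adj_iff a b).1 hab, rfl⟩

end IsOutClosedEmbedding

section Automorphisms

variable {E : V → V → Prop} {α : V} {g : Equiv.Perm V}

theorem IsAut.isOutClosedEmbedding (hg : IsAut E g) : IsOutClosedEmbedding E g :=
  ⟨g.injective, fun a b => (hg a b).symm, fun _ z _ => ⟨g.symm z, g.apply_symm_apply z⟩⟩

theorem IsAut.symm (hg : IsAut E g) : IsAut E g.symm := fun x y => by
  simpa only [Equiv.apply_symm_apply] using (hg (g.symm x) (g.symm y)).symm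

theorem IsAut.image_descN (hg : IsAut E g) (hgα : g α = α) (n : ℕ) :
    g '' descN E n α = descN E n α := by
  rw [← hg.isOutClosedEmbedding.descN_eq_image, hgα]

end Automorphisms

section DescendantIsomorphism

variable {E : V → V → Prop} {α : V} {m : ℕ} {r : ℕ → ℕ}

/-- The inverse of the isomorphism `desc E u ≃ V` given by `P1`; it sends `α` to `u` because
the levels are disjoint. -/
theorem P1.exists_embedding (h1 : P1 E) (h0 : P0 E α m) (hroot : Rooted E α) (u : V) :
    ∃ g, IsOutClosedEmbedding E g ∧ g α = u := by
  obtain ⟨f, hf⟩ := h1 u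
  set g : V → V := fun w => (f.symm w).1
  have hg : IsOutClosedEmbedding E g := by
    refine ⟨Subtype.val_injective.comp f.symm.injective, fun a b => ?_, fun a z h => ?_⟩
    · simpa only [Equiv.apply_symm_apply] using hf (f.symm a) (f.symm b)
    · exact ⟨f ⟨z, mem_desc_of_adj (f.symm a).2 h⟩, by simp [g]⟩
  refine ⟨g, hg, ?_⟩
  set β := f ⟨u, self_mem_desc E u⟩
  have hβ : g β = u := by simp [g, β]
  obtain ⟨k, hk⟩ := (f.symm α).2
  have hβα : arcOf E k β α := hg.arcOf_iff.1 (hβ ▸ hk)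
  obtain ⟨l, hαβ⟩ := hroot β
  have hcycle : α ∈ descN E (l + k) α := arcOf_add.2 ⟨β, hαβ, hβα⟩
  obtain ⟨rfl, -⟩ : l = 0 ∧ k = 0 := by
    have := h0.eq_of_mem_descN (s := 0) rfl hcycle; omega
  rw [show α = β from hαβ, hβ]


theorem P1.ncard_descN (h1 : P1 E) (h0 : P0 E α m) (hroot : Rooted E α) (u : V) (n : ℕ) :
    (descN E n u).ncard = (descN E n α).ncard := by
  obtain ⟨g, hg, rfl⟩ := h1.exists_embedding h0 hroot u
  rw [hg.descN_eq_image, ncard_image_of_injective _ hg.injective]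

/-- In `desc E u ≅ Γ` with `u` on level `1`, a vertex of level `k` of `Γ` sits on level `k + 1`
and keeps its `r k` in-neighbours. -/
theorem P1.inValency_le_succ (h1 : P1 E) (h0 : P0 E α m) (hroot : Rooted E α)
    (hr : IsInValency E α r) {k : ℕ} (hk : 1 ≤ k) : r k ≤ r (k + 1) := by
  obtain ⟨u, hu⟩ := h0.nonempty_descN α 1
  obtain ⟨g, hg, rfl⟩ := h1.exists_embedding h0 hroot u
  obtain ⟨w, hw⟩ := h0.nonempty_descN α k
  have hgw : g w ∈ descN E (k + 1) α := mem_descN_one_add hu (hg.arcOf_iff.2 hw)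
  rw [← hr k hk w hw, ← hr (k + 1) (by omega) (g w) hgw,
    ← ncard_image_of_injective _ hg.injective, hg.image_inSet]
  exact ncard_le_ncard inter_subset_right (h0.finite_inSet hroot hgw)

theorem P1.inValency_mono (h1 : P1 E) (h0 : P0 E α m) (hroot : Rooted E α)
    (hr : IsInValency E α r) {i j : ℕ} (hi : 1 ≤ i) (hij : i ≤ j) : r i ≤ r j := by
  induction j, hij using Nat.le_induction with
  | base => rfl
  | succ j hij ih => exact ih.trans (h1.inValency_le_succ h0 hroot hr (hi.trans hij))

end DescendantIsomorphism

def levelOneAncestors (E : V → V → Prop) (α : V) (n : ℕ) (z : V) : Set V :=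
  {w ∈ descN E 1 α | arcOf E n w z}

section Ancestors

variable {E : V → V → Prop} {α y y' z z' : V} {m n : ℕ} {r : ℕ → ℕ}

theorem IsAut.image_levelOneAncestors {g : Equiv.Perm V} (hg : IsAut E g) (hgα : g α = α) :
    g '' levelOneAncestors E α n z = levelOneAncestors E α n (g z) := by
  ext y
  constructor
  · rintro ⟨w, ⟨hw, hwz⟩, rfl⟩
    exact ⟨hg.image_descN hgα 1 ▸ mem_image_of_mem g hw, hg.isOutClosedEmbedding.arcOf_iff.2 hwz⟩
  · rintro ⟨hy, hyz⟩
    rw [← hg.image_descN hgα 1] at hy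
    obtain ⟨w, hw, rfl⟩ := hy
    exact ⟨w, ⟨hw, hg.isOutClosedEmbedding.arcOf_iff.1 hyz⟩, rfl⟩

theorem P0.finite_levelOneAncestors (h0 : P0 E α m) (n : ℕ) (z : V) :
    (levelOneAncestors E α n z).Finite :=
  (h0.finite_descN α 1).subset fun _ h => h.1

/-- Double count the `n`-arcs from level `1` to level `n + 1`: by `P1` every vertex of level `1`
starts `|Γ^n(α)|` of them, and by `P2` every vertex of level `n + 1` ends equally many. -/
theorem ncard_levelOneAncestors (h0 : P0 E α m) (hroot : Rooted E α) (h1 : P1 E) (h2 : P2 E α)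
    (hr : IsInValency E α r) (hz : z ∈ descN E (n + 1) α) :
    (levelOneAncestors E α n z).ncard = r (n + 1) := by
  have hrow : ∀ w ∈ descN E 1 α, {y ∈ descN E (n + 1) α | arcOf E n w y}.ncard =
      (descN E n α).ncard := fun w hw => by
    rw [← h1.ncard_descN h0 hroot w n]
    congr 1
    ext y
    exact ⟨fun h => h.2, fun h => ⟨mem_descN_one_add hw h, h⟩⟩
  have hcol : ∀ y ∈ descN E (n + 1) α,
      (levelOneAncestors E α n y).ncard = (levelOneAncestors E α n z).ncard := fun y hy => by
    obtain ⟨g, hg, hgα, rfl⟩ := h2 (n + 1) y hy z hz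
    rw [← hg.image_levelOneAncestors hgα, ncard_image_of_injective _ g.injective]
  have hcount := ncard_mul_eq_ncard_mul_of_biregular (h0.finite_descN α 1)
    (h0.finite_descN α (n + 1)) (arcOf E n) hrow hcol
  rw [h0.ncard_descN_one hroot hr, mul_comm, ← h0.ncard_descN_succ_mul hroot hr] at hcount
  exact (Nat.eq_of_mul_eq_mul_left (h0.ncard_descN_pos α (n + 1)) hcount).symm

theorem levelOneAncestors_subset_of_adj (h : E z z') :
    levelOneAncestors E α n z ⊆ levelOneAncestors E α (n + 1) z' :=
  fun _ ⟨hw, hwz⟩ => ⟨hw, arcOf_succ'.2 ⟨z, hwz, h⟩⟩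

theorem levelOneAncestors_eq_of_adj (h0 : P0 E α m) (hroot : Rooted E α) (h1 : P1 E)
    (h2 : P2 E α) (hr : IsInValency E α r) {N : ℕ} (hNconst : ∀ j, N ≤ j → r j = r N)
    (hN : N ≤ n + 1) (hz : z ∈ descN E (n + 1) α) (h : E z z') :
    levelOneAncestors E α n z = levelOneAncestors E α (n + 1) z' := by
  have hz' : z' ∈ descN E (n + 1 + 1) α := arcOf_succ'.2 ⟨z, hz, h⟩
  refine eq_of_subset_of_ncard_le (levelOneAncestors_subset_of_adj h) ?_
    (h0.finite_levelOneAncestors _ _)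
  rw [ncard_levelOneAncestors h0 hroot h1 h2 hr hz, ncard_levelOneAncestors h0 hroot h1 h2 hr hz',
    hNconst _ hN, hNconst _ (by omega)]

theorem levelOneAncestors_eq_of_arcOf (h0 : P0 E α m) (hroot : Rooted E α) (h1 : P1 E)
    (h2 : P2 E α) (hr : IsInValency E α r) {N : ℕ} (hNconst : ∀ j, N ≤ j → r j = r N)
    (hN : N ≤ n + 1) (hz : z ∈ descN E (n + 1) α) {k : ℕ} (h : arcOf E k z z') :
    levelOneAncestors E α n z = levelOneAncestors E α (n + k) z' := by
  induction k generalizing n z with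
  | zero => obtain rfl : z = z' := h; rfl
  | succ k ih =>
    obtain ⟨w, hzw, hw⟩ := h
    rw [levelOneAncestors_eq_of_adj h0 hroot h1 h2 hr hNconst hN hz hzw,
      ih (by omega) (arcOf_succ'.2 ⟨z, hz, hzw⟩) hw, Nat.add_right_comm, Nat.add_assoc]

theorem levelOneAncestors_eq_of_inter_desc (h0 : P0 E α m) (hroot : Rooted E α) (h1 : P1 E)
    (h2 : P2 E α) (hr : IsInValency E α r) {N : ℕ} (hNconst : ∀ j, N ≤ j → r j = r N)
    (hN : N ≤ n + 1) (hy : y ∈ descN E (n + 1) α) (hy' : y' ∈ descN E (n + 1) α)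
    (h : (desc E y ∩ desc E y').Nonempty) :
    levelOneAncestors E α n y = levelOneAncestors E α n y' := by
  obtain ⟨z, ⟨k, hk⟩, ⟨k', hk'⟩⟩ := h
  obtain rfl : k = k' := by
    have := h0.eq_of_mem_descN (mem_descN_add hy hk) (mem_descN_add hy' hk'); omega
  rw [levelOneAncestors_eq_of_arcOf h0 hroot h1 h2 hr hNconst hN hy hk,
    levelOneAncestors_eq_of_arcOf h0 hroot h1 h2 hr hNconst hN hy' hk']

/-- If the ancestor sets on level `M + 1` partitioned level `1`, two distinct `u, v` in one of them
(there are `r (M + 1) ≥ 2`) would satisfy `Γ^M(u) = Γ^M(v)`. -/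
theorem exists_levelOneAncestors_ne (h0 : P0 E α m) (hroot : Rooted E α) (h1 : P1 E)
    (h2 : P2 E α) (hr : IsInValency E α r) {M : ℕ}
    (hdelta : ∀ u v : V, descN E M u = descN E M v → u = v) (ht : 2 ≤ r (M + 1)) :
    ∃ y ∈ descN E (M + 1) α, ∃ y' ∈ descN E (M + 1) α,
      (levelOneAncestors E α M y ∩ levelOneAncestors E α M y').Nonempty ∧
        levelOneAncestors E α M y ≠ levelOneAncestors E α M y' := by
  by_contra! H
  obtain ⟨u, hu⟩ := h0.nonempty_descN α 1
  obtain ⟨y₀, hy₀⟩ := h0.nonempty_descN u M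
  have hy₀' := mem_descN_one_add hu hy₀
  have hu₀ : u ∈ levelOneAncestors E α M y₀ := ⟨hu, hy₀⟩
  obtain ⟨v, hv₀, hvu⟩ := exists_ne_of_one_lt_ncard
    (by rw [ncard_levelOneAncestors h0 hroot h1 h2 hr hy₀']; omega) u
  have hsub : ∀ w ∈ levelOneAncestors E α M y₀, ∀ w' ∈ levelOneAncestors E α M y₀,
      descN E M w ⊆ descN E M w' := fun w hw w' hw' y hy => by
    have hA := H y (mem_descN_one_add hw.1 hy) y₀ hy₀' ⟨w, ⟨hw.1, hy⟩, hw⟩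
    exact (hA ▸ hw' : w' ∈ levelOneAncestors E α M y).2
  exact hvu (hdelta v u (subset_antisymm (hsub v hv₀ u hu₀) (hsub u hu₀ v hv₀)))

end Ancestors

def ShareDescendant (E : V → V → Prop) (S : Set V) (x y : V) : Prop :=
  x ∈ S ∧ y ∈ S ∧ (desc E x ∩ desc E y).Nonempty

def Linked (E : V → V → Prop) (S : Set V) : V → V → Prop :=
  Relation.ReflTransGen (ShareDescendant E S)

section Linked

variable {E : V → V → Prop} {α x x' y y' : V} {m n : ℕ} {S T : Set V}

instance : Std.Symm (ShareDescendant E S) :=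
  ⟨fun _ _ ⟨hx, hy, z, hzx, hzy⟩ => ⟨hy, hx, z, hzy, hzx⟩⟩

theorem Linked.symm (h : Linked E S x y) : Linked E S y x :=
  Relation.ReflTransGen.stdSymm.symm x y h

theorem IsOutClosedEmbedding.linked {g : V → V} (hg : IsOutClosedEmbedding E g)
    (hST : g '' S ⊆ T) (h : Linked E S x y) : Linked E T (g x) (g y) := by
  refine Relation.ReflTransGen.lift g (fun a b ⟨ha, hb, z, hza, hzb⟩ => ?_) x y h
  refine ⟨hST (mem_image_of_mem g ha), hST (mem_image_of_mem g hb), g z, ?_, ?_⟩ <;>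
    rw [hg.desc_eq_image] <;> exact mem_image_of_mem g ‹_›

/-- Transport the linkage of level `1` into the children of `x` through `desc E x ≅ Γ`. -/
theorem linked_of_adj_of_adj (h0 : P0 E α m) (hroot : Rooted E α) (h1 : P1 E)
    (hc : ∀ a ∈ descN E 1 α, ∀ b ∈ descN E 1 α, Linked E (descN E 1 α) a b)
    (hx : x ∈ descN E n α) (hy : E x y) (hy' : E x y') : Linked E (descN E (n + 1) α) y y' := by
  obtain ⟨g, hg, rfl⟩ := h1.exists_embedding h0 hroot x
  obtain ⟨a, rfl⟩ := hg.out_closed α y hy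
  obtain ⟨b, rfl⟩ := hg.out_closed α y' hy'
  refine hg.linked ?_ (hc a (arcOf_one.2 ((hg.adj_iff α a).1 hy)) b
    (arcOf_one.2 ((hg.adj_iff α b).1 hy')))
  rw [← hg.descN_eq_image]
  exact fun z hz => mem_descN_add hx hz

theorem linked_succ_of_shareDescendant (h0 : P0 E α m) (hroot : Rooted E α) (h1 : P1 E)
    (hc : ∀ a ∈ descN E 1 α, ∀ b ∈ descN E 1 α, Linked E (descN E 1 α) a b)
    (h : ShareDescendant E (descN E n α) x x') (hy : E x y) (hy' : E x' y') :
    Linked E (descN E (n + 1) α) y y' := by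
  obtain ⟨hx, hx', z, ⟨k, hk⟩, ⟨k', hk'⟩⟩ := h
  obtain rfl : k = k' := by
    have := h0.eq_of_mem_descN (mem_descN_add hx hk) (mem_descN_add hx' hk'); omega
  cases k with
  | zero =>
    obtain rfl : x = x' := (hk : x = z).trans (hk' : x' = z).symm
    exact linked_of_adj_of_adj h0 hroot h1 hc hx hy hy'
  | succ k =>
    obtain ⟨w, hxw, hw⟩ := hk
    obtain ⟨w', hx'w', hw'⟩ := hk'
    have hww' : ShareDescendant E (descN E (n + 1) α) w w' :=
      ⟨arcOf_succ'.2 ⟨x, hx, hxw⟩, arcOf_succ'.2 ⟨x', hx', hx'w'⟩, z, ⟨k, hw⟩, ⟨k, hw'⟩⟩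
    exact ((linked_of_adj_of_adj h0 hroot h1 hc hx hy hxw).tail hww').trans
      (linked_of_adj_of_adj h0 hroot h1 hc hx' hx'w' hy')

theorem linked_succ_of_linked (h0 : P0 E α m) (hroot : Rooted E α) (h1 : P1 E)
    (hc : ∀ a ∈ descN E 1 α, ∀ b ∈ descN E 1 α, Linked E (descN E 1 α) a b)
    (hx : x ∈ descN E n α) (h : Linked E (descN E n α) x x') (hy : E x y) (hy' : E x' y') :
    Linked E (descN E (n + 1) α) y y' := by
  induction h generalizing y' with
  | refl => exact linked_of_adj_of_adj h0 hroot h1 hc hx hy hy'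
  | tail _ hbc ih =>
    obtain ⟨z, hz⟩ := h0.nonempty_outSet _
    exact (ih hz).trans (linked_succ_of_shareDescendant h0 hroot h1 hc hbc hz hy')

theorem linked_descN (h0 : P0 E α m) (hroot : Rooted E α) (h1 : P1 E)
    (hc : ∀ a ∈ descN E 1 α, ∀ b ∈ descN E 1 α, Linked E (descN E 1 α) a b) (hn : 1 ≤ n) :
    ∀ y ∈ descN E n α, ∀ y' ∈ descN E n α, Linked E (descN E n α) y y' := by
  induction n, hn using Nat.le_induction with
  | base => exact hc
  | succ n _ ih =>
    intro y hy y' hy'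
    obtain ⟨x, hx, hxy⟩ := arcOf_succ'.1 hy
    obtain ⟨x', hx', hx'y'⟩ := arcOf_succ'.1 hy'
    exact linked_succ_of_linked h0 hroot h1 hc hx (ih x hx x' hx') hxy hx'y'

theorem levelOneAncestors_eq_of_linked {r : ℕ → ℕ} (h0 : P0 E α m) (hroot : Rooted E α)
    (h1 : P1 E) (h2 : P2 E α) (hr : IsInValency E α r) {N : ℕ}
    (hNconst : ∀ j, N ≤ j → r j = r N) (hN : N ≤ n + 1) (h : Linked E (descN E (n + 1) α) y y') :
    levelOneAncestors E α n y = levelOneAncestors E α n y' := by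
  induction h with
  | refl => rfl
  | tail _ hbc ih =>
    exact ih.trans
      (levelOneAncestors_eq_of_inter_desc h0 hroot h1 h2 hr hNconst hN hbc.1 hbc.2.1 hbc.2.2)

end Linked

def blockOf (E : V → V → Prop) (α u : V) : Set V :=
  {v ∈ descN E 1 α | Linked E (descN E 1 α) u v}

def blocks (E : V → V → Prop) (α : V) : Set (Set V) :=
  blockOf E α '' descN E 1 α

section Blocks

variable {E : V → V → Prop} {α u v : V} {m : ℕ} {ω ω' : Set V}

theorem mem_blockOf_self (hu : u ∈ descN E 1 α) : u ∈ blockOf E α u :=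
  ⟨hu, Relation.ReflTransGen.refl⟩

theorem blockOf_eq_of_mem (hv : v ∈ blockOf E α u) : blockOf E α v = blockOf E α u := by
  ext w
  exact ⟨fun ⟨hw, hvw⟩ => ⟨hw, hv.2.trans hvw⟩, fun ⟨hw, huw⟩ => ⟨hw, hv.2.symm.trans huw⟩⟩

theorem P0.finite_blockOf (h0 : P0 E α m) (u : V) : (blockOf E α u).Finite :=
  (h0.finite_descN α 1).subset fun _ h => h.1

theorem nonempty_of_mem_blocks (hω : ω ∈ blocks E α) : ω.Nonempty := by
  obtain ⟨u, hu, rfl⟩ := hω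
  exact ⟨u, mem_blockOf_self hu⟩

theorem sUnion_blocks : ⋃₀ blocks E α = descN E 1 α := by
  refine subset_antisymm ?_ fun u hu => ⟨_, mem_image_of_mem _ hu, mem_blockOf_self hu⟩
  rintro x ⟨_, ⟨u, -, rfl⟩, hx⟩
  exact hx.1

theorem blockOf_eq_of_shareDescendant (hu : u ∈ blockOf E α u') (hv : v ∈ blockOf E α v')
    (h : ShareDescendant E (descN E 1 α) u v) : blockOf E α u' = blockOf E α v' := by
  rw [← blockOf_eq_of_mem hu, ← blockOf_eq_of_mem hv]
  exact (blockOf_eq_of_mem ⟨hv.1, Relation.ReflTransGen.single h⟩).symm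

theorem disjoint_descSet_of_mem_blocks (hω : ω ∈ blocks E α) (hω' : ω' ∈ blocks E α)
    (hne : ω ≠ ω') : Disjoint (descSet E ω) (descSet E ω') := by
  obtain ⟨u', -, rfl⟩ := hω
  obtain ⟨v', -, rfl⟩ := hω'
  refine disjoint_left.2 fun z hz hz' => hne ?_
  simp only [descSet, mem_iUnion₂] at hz hz'
  obtain ⟨u, hu, hzu⟩ := hz
  obtain ⟨v, hv, hzv⟩ := hz'
  exact blockOf_eq_of_shareDescendant hu hv ⟨hu.1, hv.1, z, hzu, hzv⟩

theorem disjoint_of_mem_blocks (hω : ω ∈ blocks E α) (hω' : ω' ∈ blocks E α) (hne : ω ≠ ω') :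
    Disjoint ω ω' :=
  (disjoint_descSet_of_mem_blocks hω hω' hne).mono
    (fun _ hx => self_mem_descSet E hx) (fun _ hx => self_mem_descSet E hx)

theorem IsAut.image_blockOf {g : Equiv.Perm V} (hg : IsAut E g) (hgα : g α = α) (u : V) :
    g '' blockOf E α u = blockOf E α (g u) := by
  have hD := hg.image_descN hgα 1
  have hD' := hg.symm.image_descN (by rw [Equiv.symm_apply_eq, hgα]) 1
  ext w
  constructor
  · rintro ⟨v, ⟨hv, huv⟩, rfl⟩
    exact ⟨hD ▸ mem_image_of_mem g hv, hg.isOutClosedEmbedding.linked hD.subset huv⟩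
  · rintro ⟨hw, huw⟩
    refine ⟨g.symm w, ⟨hD' ▸ mem_image_of_mem _ hw, ?_⟩, g.apply_symm_apply w⟩
    simpa only [Equiv.symm_apply_apply] using hg.symm.isOutClosedEmbedding.linked hD'.subset huw

theorem IsAut.image_mem_blocks {g : Equiv.Perm V} (hg : IsAut E g) (hgα : g α = α)
    (hω : ω ∈ blocks E α) : g '' ω ∈ blocks E α := by
  obtain ⟨u, hu, rfl⟩ := hω
  rw [hg.image_blockOf hgα]
  exact mem_image_of_mem _ (hg.image_descN hgα 1 ▸ mem_image_of_mem g hu)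

theorem P2.ncard_blockOf (h2 : P2 E α) (hu : u ∈ descN E 1 α) (hv : v ∈ descN E 1 α) :
    (blockOf E α u).ncard = (blockOf E α v).ncard := by
  obtain ⟨g, hg, hgα, rfl⟩ := h2 1 u hu v hv
  rw [← hg.image_blockOf hgα, ncard_image_of_injective _ g.injective]

theorem ncard_blocks_mul {r : ℕ → ℕ} (h0 : P0 E α m) (hroot : Rooted E α) (h2 : P2 E α)
    (hr : IsInValency E α r) (hu : u ∈ descN E 1 α) :
    (blocks E α).ncard * (blockOf E α u).ncard = m := by
  have hrow : ∀ x ∈ descN E 1 α, {ω ∈ blocks E α | x ∈ ω}.ncard = 1 := fun x hx => by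
    rw [ncard_eq_one]
    refine ⟨blockOf E α x, subset_antisymm ?_ ?_⟩
    · rintro _ ⟨⟨v, -, rfl⟩, hxv⟩
      exact (blockOf_eq_of_mem hxv).symm
    · rintro _ rfl
      exact ⟨mem_image_of_mem _ hx, mem_blockOf_self hx⟩
  have hcol : ∀ ω ∈ blocks E α, {x ∈ descN E 1 α | x ∈ ω}.ncard = (blockOf E α u).ncard := by
    rintro _ ⟨v, hv, rfl⟩
    rw [sep_mem_eq, inter_eq_right.2 fun _ h => h.1, h2.ncard_blockOf hv hu]
  have := ncard_mul_eq_ncard_mul_of_biregular (t := blocks E α) (h0.finite_descN α 1)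
    ((h0.finite_descN α 1).image _) (fun x ω => x ∈ ω) hrow hcol
  rw [← this, h0.ncard_descN_one hroot hr, mul_one]

end Blocks

section BlockSize

variable {E : V → V → Prop} {α u z : V} {m n : ℕ} {r : ℕ → ℕ}

theorem levelOneAncestors_subset_blockOf {w : V} (hw : w ∈ levelOneAncestors E α n z) :
    levelOneAncestors E α n z ⊆ blockOf E α w :=
  fun _ hv => ⟨hv.1, Relation.ReflTransGen.single ⟨hw.1, hv.1, z, ⟨n, hw.2⟩, ⟨n, hv.2⟩⟩⟩

/-- A single block would link all of level `1`, hence (by `P1`) all of level `M + 1`, whose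
ancestor sets would then all coincide. -/
theorem two_le_ncard_blocks (h0 : P0 E α m) (hroot : Rooted E α) (h1 : P1 E) (h2 : P2 E α)
    (hr : IsInValency E α r) {M : ℕ} (hNconst : ∀ j, M + 1 ≤ j → r j = r (M + 1))
    (hdelta : ∀ u v : V, descN E M u = descN E M v → u = v) (ht : 2 ≤ r (M + 1)) :
    2 ≤ (blocks E α).ncard := by
  by_contra! hlt
  have hc : ∀ a ∈ descN E 1 α, ∀ b ∈ descN E 1 α, Linked E (descN E 1 α) a b := fun a ha b hb =>
    have hab : blockOf E α b = blockOf E α a := (ncard_le_one_iff ((h0.finite_descN α 1).image _)).1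
      (Nat.le_of_lt_succ hlt) (mem_image_of_mem _ hb) (mem_image_of_mem _ ha)
    (hab ▸ mem_blockOf_self hb).2
  obtain ⟨y, hy, y', hy', -, hne⟩ :=
    exists_levelOneAncestors_ne h0 hroot h1 h2 hr hdelta ht
  exact hne (levelOneAncestors_eq_of_linked h0 hroot h1 h2 hr hNconst le_rfl
    (linked_descN h0 hroot h1 hc M.succ_pos y hy y' hy'))

/-- Each ancestor set on level `M + 1` lies in a block; if it filled the block, the ancestor sets
would partition level `1`. -/
theorem inValency_lt_ncard_blockOf (h0 : P0 E α m) (hroot : Rooted E α) (h1 : P1 E)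
    (h2 : P2 E α) (hr : IsInValency E α r) {M : ℕ}
    (hdelta : ∀ u v : V, descN E M u = descN E M v → u = v) (ht : 2 ≤ r (M + 1))
    (hu : u ∈ descN E 1 α) : r (M + 1) < (blockOf E α u).ncard := by
  have hle : ∀ y ∈ descN E (M + 1) α, ∀ w ∈ levelOneAncestors E α M y,
      r (M + 1) ≤ (blockOf E α u).ncard := fun y hy w hw => by
    rw [← ncard_levelOneAncestors h0 hroot h1 h2 hr hy, ← h2.ncard_blockOf hw.1 hu]
    exact ncard_le_ncard (levelOneAncestors_subset_blockOf hw) (h0.finite_blockOf w)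
  obtain ⟨y, hy, y', hy', ⟨w, hw, hw'⟩, hne⟩ :=
    exists_levelOneAncestors_ne h0 hroot h1 h2 hr hdelta ht
  refine (hle y hy w hw).lt_of_ne fun heq => hne ?_
  have hfill : ∀ z ∈ descN E (M + 1) α, w ∈ levelOneAncestors E α M z →
      levelOneAncestors E α M z = blockOf E α w := fun z hz hwz => by
    refine eq_of_subset_of_ncard_le (levelOneAncestors_subset_blockOf hwz) ?_
      (h0.finite_blockOf w)
    rw [ncard_levelOneAncestors h0 hroot h1 h2 hr hz, heq, h2.ncard_blockOf hw.1 hu]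
  rw [hfill y hy hw, hfill y' hy' hw']

end BlockSize

section InValency

variable {E : V → V → Prop} {α : V} {m : ℕ} {r : ℕ → ℕ}

theorem P0.inValency_pos (h0 : P0 E α m) (hroot : Rooted E α) (hr : IsInValency E α r)
    {i : ℕ} (hi : 1 ≤ i) : 0 < r i := by
  obtain ⟨n, rfl⟩ := Nat.exists_eq_add_of_le' hi
  exact Nat.pos_of_dvd_of_pos (h0.inValency_dvd_pow hroot hr n) (pow_pos h0.1 _)

theorem two_le_inValency (h0 : P0 E α m) (hroot : Rooted E α) (h1 : P1 E)
    (hr : IsInValency E α r) (hnottree : ¬ ∀ i, 1 ≤ i → r i = 1) {N : ℕ}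
    (hNconst : ∀ j, N ≤ j → r j = r N) : 2 ≤ r N := by
  by_contra! hlt
  refine hnottree fun i hi => ?_
  have hle : r i ≤ r N := by
    rcases le_total i N with hiN | hNi
    · exact h1.inValency_mono h0 hroot hr hi hiN
    · exact (hNconst i hNi).le
  have := h0.inValency_pos hroot hr hi
  omega

theorem inValency_lt_of_minimal (h0 : P0 E α m) (hroot : Rooted E α) (h1 : P1 E)
    (hr : IsInValency E α r) {M : ℕ} (hM : 1 ≤ M) (hNconst : ∀ j, M + 1 ≤ j → r j = r (M + 1))
    (hNmin : ∀ N', 1 ≤ N' → (∀ j, N' ≤ j → r j = r N') → M + 1 ≤ N') : r M < r (M + 1) := by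
  refine (h1.inValency_mono h0 hroot hr hM M.le_succ).lt_of_ne fun heq => ?_
  have := hNmin M hM fun j hj => by
    rcases hj.eq_or_lt with rfl | hj
    · rfl
    · rw [hNconst j hj, heq]
  omega

theorem P0.inValency_eq_one_of_lt (h0 : P0 E α m) (hroot : Rooted E α) (hr : IsInValency E α r)
    {i b : ℕ} (hi : 1 ≤ i) (hb : ∀ ℓ, ℓ.Prime → ℓ ∣ m → b ≤ ℓ) (hib : r i < b) : r i = 1 := by
  obtain ⟨n, rfl⟩ := Nat.exists_eq_add_of_le' hi
  by_contra hne
  obtain ⟨ℓ, hℓ, hℓr⟩ := Nat.exists_prime_and_dvd hne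
  have hℓm := hℓ.dvd_of_dvd_pow (hℓr.trans (h0.inValency_dvd_pow hroot hr n))
  have := Nat.le_of_dvd (h0.inValency_pos hroot hr hi) hℓr
  have := hb ℓ hℓ hℓm
  omega

end InValency

theorem dvd_of_forall_pow_dvd_pow_add {t m n : ℕ} (ht : t ≠ 0) (hm : m ≠ 0)
    (h : ∀ k, t ^ k ∣ m ^ (n + k)) : t ∣ m := by
  rw [← Nat.factorization_le_iff_dvd ht hm]
  intro ℓ
  by_contra! hlt
  set a := t.factorization ℓ
  set b := m.factorization ℓ
  have hk := (Nat.factorization_le_iff_dvd (pow_ne_zero _ ht) (pow_ne_zero _ hm)).2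
    (h (n * b + 1)) ℓ
  simp only [Nat.factorization_pow, Finsupp.smul_apply, smul_eq_mul] at hk
  nlinarith [Nat.mul_le_mul_left (n * b + 1) (Nat.succ_le_of_lt hlt)]

theorem eq_of_dvd_prime_mul_prime {p q d : ℕ} (hp : p.Prime) (hq : q.Prime)
    (hd : d ∣ p * q) : d = 1 ∨ d = p ∨ d = q ∨ d = p * q := by
  obtain ⟨a, b, ha, hb, rfl⟩ := Nat.dvd_mul.1 hd
  rcases (Nat.dvd_prime hp).1 ha with rfl | rfl <;>
    rcases (Nat.dvd_prime hq).1 hb with rfl | rfl <;> simp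

theorem le_of_prime_dvd_prime_mul_prime {p q ℓ : ℕ} (hp : p.Prime) (hq : q.Prime)
    (hpq : p ≤ q) (hℓ : ℓ.Prime) (h : ℓ ∣ p * q) : p ≤ ℓ := by
  rcases eq_of_dvd_prime_mul_prime hp hq h with rfl | rfl | rfl | rfl
  · exact absurd hℓ Nat.not_prime_one
  · rfl
  · exact hpq
  · exact absurd hℓ (Nat.not_prime_mul hp.ne_one hq.ne_one)

theorem eq_of_lt_of_dvd_prime_mul_prime {p q s c t : ℕ} (hp : p.Prime) (hq : q.Prime)
    (hpq : p < q) (hsc : s * c = p * q) (hs : 2 ≤ s) (ht : 2 ≤ t) (htc : t < c) (htm : t ∣ p * q) :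
    t = p ∧ c = q ∧ s = p := by
  have hpq0 : 0 < p * q := Nat.mul_pos hp.pos hq.pos
  have hc : 2 * c ≤ p * q := hsc ▸ Nat.mul_le_mul_right c hs
  have hcq : c = q := by
    rcases eq_of_dvd_prime_mul_prime hp hq (Dvd.intro_left s hsc) with h | h | h | h
    · omega
    · rcases eq_of_dvd_prime_mul_prime hp hq htm with h' | h' | h' | h' <;> omega
    · exact h
    · omega
  subst hcq
  refine ⟨?_, rfl, Nat.eq_of_mul_eq_mul_right hq.pos hsc⟩
  rcases eq_of_dvd_prime_mul_prime hp hq htm with h | h | h | h <;> omega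

theorem pq_block_system_general (E : V → V → Prop) (α : V) (p q m N : ℕ) (r : ℕ → ℕ)
    (hp : p.Prime) (hq : q.Prime) (hpq : p < q) (hm : m = p * q)
    (hroot : Rooted E α) (h0 : P0 E α m) (h1 : P1 E) (h2 : P2 E α)
    (hnottree : ¬ ∀ i : ℕ, 1 ≤ i → r i = 1)
    (hr : ∀ i : ℕ, 1 ≤ i → ∀ x ∈ descN E i α, (inSet E x).ncard = r i)
    (hN1 : 1 ≤ N) (hNconst : ∀ j : ℕ, N ≤ j → r j = r N)
    (hNmin : ∀ N' : ℕ, 1 ≤ N' → (∀ j : ℕ, N' ≤ j → r j = r N') → N ≤ N')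
    (hdelta : ∀ u v : V, descN E (N - 1) u = descN E (N - 1) v → u = v) :
    (∃ Ω : Set (Set V),
      (∀ ω ∈ Ω, ω.Nonempty) ∧
      (⋃₀ Ω = descN E 1 α) ∧
      (∀ ω ∈ Ω, ∀ ω' ∈ Ω, ω ≠ ω' → Disjoint ω ω') ∧
      (∀ g : Equiv.Perm V, IsAut E g → g α = α → ∀ ω ∈ Ω, (g '' ω) ∈ Ω) ∧
      Ω.ncard = p ∧
      (∀ ω ∈ Ω, ω.ncard = q) ∧
      (∀ ω ∈ Ω, ∀ ω' ∈ Ω, ω ≠ ω' → Disjoint (descSet E ω) (descSet E ω'))) ∧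
    (∀ i : ℕ, 1 ≤ i → i ≤ N - 1 → r i = 1) ∧
    (∀ i : ℕ, N ≤ i → r i = p) := by
  subst hm
  obtain ⟨M, rfl⟩ : ∃ M, N = M + 1 := ⟨N - 1, by omega⟩
  rw [Nat.add_sub_cancel] at hdelta ⊢
  obtain ⟨u, hu⟩ := h0.nonempty_descN α 1
  have ht := two_le_inValency h0 hroot h1 hr hnottree hNconst
  obtain ⟨htp, hcq, hsp⟩ := eq_of_lt_of_dvd_prime_mul_prime hp hq hpq
    (ncard_blocks_mul h0 hroot h2 hr hu)
    (two_le_ncard_blocks h0 hroot h1 h2 hr hNconst hdelta ht) ht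
    (inValency_lt_ncard_blockOf h0 hroot h1 h2 hr hdelta ht hu)
    (dvd_of_forall_pow_dvd_pow_add (by omega) h0.1.ne' (h0.inValency_pow_dvd hroot hr hNconst))
  refine ⟨⟨blocks E α, fun _ => nonempty_of_mem_blocks, sUnion_blocks,
      fun _ hω _ hω' => disjoint_of_mem_blocks hω hω', fun g hg hgα _ => hg.image_mem_blocks hgα,
      hsp, ?_, fun _ hω _ hω' => disjoint_descSet_of_mem_blocks hω hω'⟩,
    fun i hi hiM => ?_, fun i hi => (hNconst i hi).trans htp⟩
  · rintro _ ⟨v, hv, rfl⟩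
    rw [h2.ncard_blockOf hv hu, hcq]
  · have hlt := inValency_lt_of_minimal h0 hroot h1 hr (hi.trans hiM) hNconst hNmin
    exact h0.inValency_eq_one_of_lt hroot hr hi
      (fun ℓ hℓ => le_of_prime_dvd_prime_mul_prime hp hq hpq.le hℓ)
      ((h1.inValency_mono h0 hroot hr hi hiM).trans_lt (hlt.trans_eq htp))

/-- out-valency `p·q`, `p < q` primes, not a tree, `δ_{N-1}` trivial. -/
theorem pq_block_system (E : V → V → Prop) (α : V) (p q m N : ℕ) (r : ℕ → ℕ)
    (hp : p.Prime) (hq : q.Prime) (hpq : p < q) (hm : m = p * q)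
    (hroot : Rooted E α) (h0 : P0 E α m) (h1 : P1 E) (h2 : P2 E α) (h3 : P3 E α)
    (hnottree : ¬ ∀ i : ℕ, 1 ≤ i → r i = 1)
    (hr : ∀ i : ℕ, 1 ≤ i → ∀ x ∈ descN E i α, (inSet E x).ncard = r i)
    (hN1 : 1 ≤ N) (hNconst : ∀ j : ℕ, N ≤ j → r j = r N)
    (hNmin : ∀ N' : ℕ, 1 ≤ N' → (∀ j : ℕ, N' ≤ j → r j = r N') → N ≤ N')
    (hdelta : ∀ u v : V, descN E (N - 1) u = descN E (N - 1) v → u = v) :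
    (∃ Ω : Set (Set V),
      (∀ ω ∈ Ω, ω.Nonempty) ∧
      (⋃₀ Ω = descN E 1 α) ∧
      (∀ ω ∈ Ω, ∀ ω' ∈ Ω, ω ≠ ω' → Disjoint ω ω') ∧
      (∀ g : Equiv.Perm V, IsAut E g → g α = α → ∀ ω ∈ Ω, (g '' ω) ∈ Ω) ∧
      Ω.ncard = p ∧
      (∀ ω ∈ Ω, ω.ncard = q) ∧
      (∀ ω ∈ Ω, ∀ ω' ∈ Ω, ω ≠ ω' → Disjoint (descSet E ω) (descSet E ω'))) ∧
    (∀ i : ℕ, 1 ≤ i → i ≤ N - 1 → r i = 1) ∧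
    (∀ i : ℕ, N ≤ i → r i = p) :=
  pq_block_system_general E α p q m N r hp hq hpq hm hroot h0 h1 h2 hnottree hr hN1 hNconst hNmin
    hdelta
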